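/- arXiv:2210.08684 — 4 statements merged into one kernel-verified Lean document; each statement's English description precedes it below -/
import Mathlib

section
/- Let k ≥ 1 and let S₁, …, S_k be finite nonempty sets of real numbers, each of which is 1-spaced. Call two indices i and j adjacent if the closed intervals [min S_i, max S_i] and [min S_j, max S_j] intersect, and suppose the family is interlaced: for all indices a and b there exist indices i₀ = a, i₁, …, i_m = b such that i_r and i_{r+1} are adjacent for every r. Then the union S₁ ∪ ⋯ ∪ S_k is 1-spaced. -/
/-- A finite nonempty set `S ⊆ ℝ` is 1-spaced if for all `a, b ∈ S` with `a < b`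
there exists `c ∈ S` with `a < c ≤ a + 1`. -/
def OneSpaced (S : Finset ℝ) : Prop :=
  ∀ a ∈ S, ∀ b ∈ S, a < b → ∃ c ∈ S, a < c ∧ c ≤ a + 1

theorem union_oneSpaced_of_interlaced
    (k : ℕ) (hk : 1 ≤ k) (S : Fin k → Finset ℝ)
    (hne : ∀ i, (S i).Nonempty)
    (hsp : ∀ i, OneSpaced (S i))
    (hinterlaced : ∀ a b : Fin k,
      Relation.ReflTransGen
        (fun i j => (S i).min' (hne i) ≤ (S j).max' (hne j) ∧
                    (S j).min' (hne j) ≤ (S i).max' (hne i)) a b) :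
    OneSpaced (Finset.univ.biUnion S) := by
  intro a ha b hb hab
  by_contra hcon
  push_neg at hcon
  simp only [Finset.mem_biUnion] at ha hb hcon
  obtain ⟨i, -, hai⟩ := ha
  obtain ⟨j, -, hbj⟩ := hb
  -- every set is entirely ≤ a or entirely > a + 1
  have key : ∀ p : Fin k, (∀ x ∈ S p, x ≤ a) ∨ (∀ x ∈ S p, a + 1 < x) := by
    intro p
    by_cases hlow : ∀ x ∈ S p, x ≤ a
    · exact Or.inl hlow
    · right
      push_neg at hlow
      obtain ⟨y, hy, hya⟩ := hlow
      intro x hx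
      by_contra hxle
      push_neg at hxle
      have hxa : x ≤ a := by
        by_contra h
        push_neg at h
        exact absurd (hcon x ⟨p, Finset.mem_univ p, hx⟩ h) (not_lt.mpr hxle)
      -- largest element of S p that is ≤ a
      set F := (S p).filter (· ≤ a) with hF
      have hFne : F.Nonempty := ⟨x, Finset.mem_filter.mpr ⟨hx, hxa⟩⟩
      set m := F.max' hFne with hm
      have hmF : m ∈ F := F.max'_mem hFne
      have hmS : m ∈ S p := (Finset.mem_filter.mp hmF).1
      have hma : m ≤ a := (Finset.mem_filter.mp hmF).2
      have hmy : m < y := lt_of_le_of_lt hma hya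
      obtain ⟨c, hcS, hmc, hc1⟩ := hsp p m hmS y hy hmy
      have hcmem : c ∈ Finset.univ.biUnion S :=
        Finset.mem_biUnion.mpr ⟨p, Finset.mem_univ p, hcS⟩
      by_cases hca : c ≤ a
      · have : c ≤ m := Finset.le_max' F c (Finset.mem_filter.mpr ⟨hcS, hca⟩)
        linarith
      · push_neg at hca
        have := hcon c ⟨p, Finset.mem_univ p, hcS⟩ hca
        linarith
  -- S i is low (it contains a)
  have hilow : ∀ x ∈ S i, x ≤ a := by
    rcases key i with h | h
    · exact h
    · exact absurd (h a hai) (by linarith)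
  -- lowness propagates along the interlacing chain
  have hjlow : ∀ j' : Fin k,
      Relation.ReflTransGen
        (fun p q => (S p).min' (hne p) ≤ (S q).max' (hne q) ∧
                    (S q).min' (hne q) ≤ (S p).max' (hne p)) i j' →
      ∀ x ∈ S j', x ≤ a := by
    intro j' hchain
    induction hchain with
    | refl => exact hilow
    | tail hqr hadj ih =>
      rename_i q r
      rcases key r with h | h
      · exact h
      · exfalso
        have h1 : (S r).min' (hne r) ≤ (S q).max' (hne q) := hadj.2
        have h2 : (S q).max' (hne q) ≤ a := ih ((S q).max' (hne q)) ((S q).max'_mem (hne q))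
        have h3 : a + 1 < (S r).min' (hne r) := h ((S r).min' (hne r)) ((S r).min'_mem (hne r))
        linarith
  have := hjlow j (hinterlaced i j) b hbj
  linarith
end

section
/- Let r₁, r₂ ≥ 1 and n = r₁ + r₂. Suppose v ∈ ℝⁿ can be written as v = m₁·u₁ + m₂·u₂ + Σ c_{ij}·α_{ij}, where u₁ ∈ ℝⁿ is the indicator vector of the first r₁ coordinates, u₂ is the indicator vector of the last r₂ coordinates, the sum ranges over the Levi pairs (i, j) with i < j and either both i, j ≤ r₁ or both i, j > r₁, the coefficients satisfy |c_{ij}| ≤ 1/2, and 0 ≤ m₁ − m₂ ≤ (r₁ + r₂)/2. Set m = (r₁m₁ + r₂m₂)/n. Then there exist real numbers d_{ij} for all 1 ≤ i < j ≤ n with |d_{ij}| ≤ 1/2 such that v − m·𝟙 = Σ_{1 ≤ i < j ≤ n} d_{ij}·α_{ij}, where 𝟙 ∈ ℝⁿ is the all-ones vector. -/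
theorem root_sum_apply (n : ℕ) (A : Fin n → Fin n → ℝ) (x : Fin n) :
    ((∑ i : Fin n, ∑ j : Fin n, A i j • ((Pi.single i (1 : ℝ)) - Pi.single j (1 : ℝ)) : Fin n → ℝ)) x
      = (∑ j : Fin n, A x j) - (∑ i : Fin n, A i x) := by
  simp only [Finset.sum_apply, Pi.smul_apply, Pi.sub_apply, Pi.single_apply, smul_eq_mul,
    mul_sub, mul_ite, mul_one, mul_zero, Finset.sum_sub_distrib]
  congr 1
  · simp [Finset.sum_ite_eq, Finset.sum_ite_eq']
  · simp [Finset.sum_ite_eq, Finset.sum_ite_eq']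

theorem count_ge (n r₁ : ℕ) (h : r₁ ≤ n) (t : ℝ) :
    (∑ j : Fin n, if r₁ ≤ (j : ℕ) then t else 0) = (n - r₁ : ℕ) * t := by
  rw [Fin.sum_univ_eq_sum_range (fun j => if r₁ ≤ j then t else 0), Finset.sum_ite,
    Finset.sum_const, Finset.sum_const_zero, add_zero]
  have : (Finset.range n).filter (fun j => r₁ ≤ j) = Finset.Ico r₁ n := by
    ext a; simp [Finset.mem_Ico]; omega
  rw [this, Nat.card_Ico]
  simp [mul_comm]

theorem count_lt (n r₁ : ℕ) (h : r₁ ≤ n) (t : ℝ) :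
    (∑ j : Fin n, if (j : ℕ) < r₁ then t else 0) = (r₁ : ℕ) * t := by
  rw [Fin.sum_univ_eq_sum_range (fun j => if j < r₁ then t else 0), Finset.sum_ite,
    Finset.sum_const, Finset.sum_const_zero, add_zero]
  have : (Finset.range n).filter (fun j => j < r₁) = Finset.range r₁ := by
    ext a; simp; omega
  rw [this, Finset.card_range]
  simp [mul_comm]

theorem levi_root_sum_to_full_root_sum
    (r₁ r₂ : ℕ) (hr₁ : 1 ≤ r₁) (hr₂ : 1 ≤ r₂) (n : ℕ) (hn : n = r₁ + r₂)
    (v : Fin n → ℝ) (m₁ m₂ : ℝ) (c : Fin n → Fin n → ℝ)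
    (hc : ∀ i j, |c i j| ≤ 1 / 2)
    (hm₁ : 0 ≤ m₁ - m₂) (hm₂ : m₁ - m₂ ≤ ((r₁ : ℝ) + r₂) / 2)
    (hv : v = m₁ • (fun x : Fin n => if (x : ℕ) < r₁ then (1 : ℝ) else 0)
            + m₂ • (fun x : Fin n => if r₁ ≤ (x : ℕ) then (1 : ℝ) else 0)
            + ∑ i : Fin n, ∑ j : Fin n,
                if i < j ∧ ((j : ℕ) < r₁ ∨ r₁ ≤ (i : ℕ)) then
                  c i j • (Pi.single i (1 : ℝ) - Pi.single j (1 : ℝ))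
                else 0) :
    ∃ d : Fin n → Fin n → ℝ, (∀ i j, |d i j| ≤ 1 / 2) ∧
      v - (fun _ : Fin n => ((r₁ : ℝ) * m₁ + (r₂ : ℝ) * m₂) / n)
        = ∑ i : Fin n, ∑ j : Fin n,
            if i < j then d i j • (Pi.single i (1 : ℝ) - Pi.single j (1 : ℝ))
            else 0 := by
  have hrpos : (0 : ℝ) < (r₁ : ℝ) + r₂ := by positivity
  set t : ℝ := (m₁ - m₂) / ((r₁ : ℝ) + r₂) with ht
  have htnn : 0 ≤ t := div_nonneg hm₁ hrpos.le
  have htle : t ≤ 1 / 2 := by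
    rw [ht, div_le_iff₀ hrpos]
    linarith [hm₂]
  refine ⟨fun i j => if (j : ℕ) < r₁ ∨ r₁ ≤ (i : ℕ) then c i j else t, ?_, ?_⟩
  · intro i j; dsimp only; split_ifs
    · exact hc i j
    · rw [abs_of_nonneg htnn]; exact htle
  · -- rewrite both double sums into the smul form
    set A : Fin n → Fin n → ℝ := fun i j =>
      if i < j then (if (j : ℕ) < r₁ ∨ r₁ ≤ (i : ℕ) then c i j else t) else 0 with hA
    set A' : Fin n → Fin n → ℝ := fun i j =>
      if i < j ∧ ((j : ℕ) < r₁ ∨ r₁ ≤ (i : ℕ)) then c i j else 0 with hA'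
    have eA : (∑ i : Fin n, ∑ j : Fin n,
        if i < j then (if (j : ℕ) < r₁ ∨ r₁ ≤ (i : ℕ) then c i j else t) •
          ((Pi.single i (1 : ℝ) : Fin n → ℝ) - Pi.single j (1 : ℝ)) else 0)
        = ∑ i : Fin n, ∑ j : Fin n, A i j • ((Pi.single i (1 : ℝ) : Fin n → ℝ) - Pi.single j (1 : ℝ)) := by
      refine Finset.sum_congr rfl fun i _ => Finset.sum_congr rfl fun j _ => ?_
      simp only [hA]; split_ifs <;> simp
    have eA' : (∑ i : Fin n, ∑ j : Fin n,
        if i < j ∧ ((j : ℕ) < r₁ ∨ r₁ ≤ (i : ℕ)) then c i j •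
          ((Pi.single i (1 : ℝ) : Fin n → ℝ) - Pi.single j (1 : ℝ)) else 0)
        = ∑ i : Fin n, ∑ j : Fin n, A' i j • ((Pi.single i (1 : ℝ) : Fin n → ℝ) - Pi.single j (1 : ℝ)) := by
      refine Finset.sum_congr rfl fun i _ => Finset.sum_congr rfl fun j _ => ?_
      simp only [hA']; split_ifs <;> simp
    rw [hv, eA', eA]
    funext x
    simp only [Pi.sub_apply, Pi.add_apply, Pi.smul_apply, smul_eq_mul, mul_ite, mul_one, mul_zero]
    rw [root_sum_apply, root_sum_apply]
    have hr₁n : r₁ ≤ n := by omega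
    have hdiff1 : ∀ j : Fin n, A x j - A' x j = if (x : ℕ) < r₁ ∧ r₁ ≤ (j : ℕ) then t else 0 := by
      intro j
      simp only [hA, hA', Fin.lt_def]
      split_ifs <;> first | ring1 | (exfalso; omega)
    have hdiff2 : ∀ i : Fin n, A i x - A' i x = if (i : ℕ) < r₁ ∧ r₁ ≤ (x : ℕ) then t else 0 := by
      intro i
      simp only [hA, hA', Fin.lt_def]
      split_ifs <;> first | ring1 | (exfalso; omega)
    have hs1 : (∑ j : Fin n, A x j) - (∑ j : Fin n, A' x j)
        = if (x : ℕ) < r₁ then (r₂ : ℝ) * t else 0 := by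
      rw [← Finset.sum_sub_distrib]
      simp only [hdiff1]
      by_cases hx : (x : ℕ) < r₁
      · simp only [hx, true_and, if_true]
        rw [count_ge n r₁ hr₁n t]
        congr 1
        simp [hn]
      · simp [hx]
    have hs2 : (∑ i : Fin n, A i x) - (∑ i : Fin n, A' i x)
        = if r₁ ≤ (x : ℕ) then (r₁ : ℝ) * t else 0 := by
      rw [← Finset.sum_sub_distrib]
      simp only [hdiff2]
      by_cases hx : r₁ ≤ (x : ℕ)
      · simp only [hx, and_true, if_true]
        rw [count_lt n r₁ hr₁n t]
      · simp [hx]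
    have hnR : (n : ℝ) = (r₁ : ℝ) + r₂ := by rw [hn]; push_cast; ring
    by_cases hx : (x : ℕ) < r₁
    · have h2 : ¬ r₁ ≤ (x : ℕ) := by omega
      simp only [hx, if_true, h2, if_false] at hs1 hs2 ⊢
      have e1 : (∑ j : Fin n, A x j) = (∑ j : Fin n, A' x j) + (r₂ : ℝ) * t := by linarith
      have e2 : (∑ i : Fin n, A i x) = (∑ i : Fin n, A' i x) := by linarith
      rw [e1, e2, hnR, ht]
      field_simp
      ring
    · have h2 : r₁ ≤ (x : ℕ) := by omega
      simp only [hx, if_false, h2, if_true] at hs1 hs2 ⊢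
      have e1 : (∑ j : Fin n, A x j) = (∑ j : Fin n, A' x j) := by linarith
      have e2 : (∑ i : Fin n, A i x) = (∑ i : Fin n, A' i x) + (r₁ : ℝ) * t := by linarith
      rw [e1, e2, hnR, ht]
      field_simp
      ring
end

section
/- Let n ≥ 1 and let y ∈ ℝⁿ be weakly increasing, with mean m = (y₁ + ⋯ + y_n)/n. Then for every weakly decreasing z ∈ ℝⁿ one has ‖y − m·𝟙‖ ≤ ‖y − z‖ in the Euclidean norm; that is, the constant vector m·𝟙 is a nearest point to y in the closed convex cone of weakly decreasing vectors. -/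
/-- The constant vector `m·𝟙` in Euclidean space. -/
noncomputable def constVec (n : ℕ) (m : ℝ) : EuclideanSpace ℝ (Fin n) := WithLp.toLp 2 (fun _ => m)

/-!
Expanding `‖y - z‖² = ‖y - m𝟙‖² + 2⟪y - m𝟙, m𝟙 - z⟫ + ‖m𝟙 - z‖²` reduces the claim to
`⟪y - m𝟙, m𝟙 - z⟫ ≥ 0`. As `y - m𝟙` has coordinate sum zero, this inner product equals
`m ∑ zᵢ - ∑ yᵢ zᵢ`, which is nonnegative by Chebyshev's sum inequality because `y` and `z` are
oppositely ordered.
-/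

open RealInnerProductSpace

lemma norm_sub_le_norm_sub_of_inner_nonneg {F : Type*} [NormedAddCommGroup F]
    [InnerProductSpace ℝ F] {y p z : F} (h : 0 ≤ ⟪y - p, p - z⟫) : ‖y - p‖ ≤ ‖y - z‖ := by
  have hsplit : ‖y - z‖ ^ 2 = ‖y - p‖ ^ 2 + 2 * ⟪y - p, p - z⟫ + ‖p - z‖ ^ 2 := by
    rw [← norm_add_sq_real, sub_add_sub_cancel]
  rw [← pow_le_pow_iff_left₀ (norm_nonneg _) (norm_nonneg _) two_ne_zero]
  nlinarith [sq_nonneg ‖p - z‖]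

/-- Covariance form of Chebyshev's sum inequality. -/
lemma Antivary.sum_sub_mean_mul_mean_sub_nonneg {ι : Type*} [Fintype ι] {f g : ι → ℝ}
    (hfg : Antivary f g) {m : ℝ} (hm : m = (∑ i, f i) / Fintype.card ι) :
    0 ≤ ∑ i, (f i - m) * (m - g i) := by
  rcases isEmpty_or_nonempty ι with hι | hι
  · simp
  have hcard : (0 : ℝ) < Fintype.card ι := by exact_mod_cast Fintype.card_pos
  have hsum : ∑ i, f i = Fintype.card ι * m := by
    rw [hm]
    field_simp
  have hexpand : ∑ i, (f i - m) * (m - g i) = m * ∑ i, g i - ∑ i, f i * g i := by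
    simp only [sub_mul, mul_sub, Finset.sum_sub_distrib, ← Finset.mul_sum, ← Finset.sum_mul,
      hsum, Finset.sum_const, Finset.card_univ, nsmul_eq_mul]
    ring
  have hcheb := hfg.card_mul_sum_le_sum_mul_sum
  rw [hexpand, hm, div_mul_eq_mul_div, sub_nonneg, le_div_iff₀ hcard]
  linarith

lemma inner_sub_constVec_constVec_sub {n : ℕ} (y z : EuclideanSpace ℝ (Fin n)) (m : ℝ) :
    ⟪y - constVec n m, constVec n m - z⟫ = ∑ i, (y i - m) * (m - z i) := by
  simp [PiLp.inner_apply, constVec, mul_comm]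

theorem mean_is_nearest_decreasing_of_increasing_general
    (n : ℕ) (y : EuclideanSpace ℝ (Fin n))
    (hy : ∀ i j : Fin n, i ≤ j → y i ≤ y j)
    (m : ℝ) (hm : m = (∑ i, y i) / n)
    (z : EuclideanSpace ℝ (Fin n)) (hz : ∀ i j : Fin n, i ≤ j → z j ≤ z i) :
    ‖y - constVec n m‖ ≤ ‖y - z‖ := by
  have hyz : Antivary (fun i => y i) (fun i => z i) := Monotone.antivary hy hz
  apply norm_sub_le_norm_sub_of_inner_nonneg
  rw [inner_sub_constVec_constVec_sub]
  exact hyz.sum_sub_mean_mul_mean_sub_nonneg (by rwa [Fintype.card_fin])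

theorem mean_is_nearest_decreasing_of_increasing
    (n : ℕ) (hn : 1 ≤ n) (y : EuclideanSpace ℝ (Fin n))
    (hy : ∀ i j : Fin n, i ≤ j → y i ≤ y j)
    (m : ℝ) (hm : m = (∑ i, y i) / n)
    (z : EuclideanSpace ℝ (Fin n)) (hz : ∀ i j : Fin n, i ≤ j → z j ≤ z i) :
    ‖y - constVec n m‖ ≤ ‖y - z‖ :=
  mean_is_nearest_decreasing_of_increasing_general n y hy m hm z hz
end

section
/- Let n ≥ 1 and let v ∈ ℝⁿ be weakly decreasing with v₁ + ⋯ + v_n = 0 and v_i − v_{i+1} ≤ 1 for all 1 ≤ i ≤ n−1. Then v lies in the convex hull of the orbit {σ·ρ : σ ∈ S_n} of the Weyl vector ρ under the action of the symmetric group S_n permuting coordinates. -/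
/-!
The vector `v` is a convex combination of the cyclic rotations of `ρ`. Read cyclically, the
consecutive differences `ρᵢ - ρᵢ₊₁` of `ρ ∈ ℝⁿ` are all `1` except for a single jump of `1 - n` at
the wrap-around, so the rotation of `ρ` whose jump sits at position `s` may be given the weight
`(1 - (vₛ - vₛ₊₁)) / n`. These weights are nonnegative by the gap condition (the wrap-around gap
`vₙ - v₁` is even `≤ 0`, as `v` is decreasing) and sum to `1`, since cyclic differences sum to
zero. The resulting mixture has the same cyclic differences as `v` and, like `v`, coordinate sum
zero; a vector is determined by these data.
-/

open Finset

/-- The Weyl vector of `gl(m + 1)` with 0-based coordinates: `ρ_{i+1} = (m + 2 - 2(i + 1)) / 2`. -/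
noncomputable def weylVector (m : ℕ) (i : Fin (m + 1)) : ℝ := m / 2 - i

lemma sum_weylVector (m : ℕ) : ∑ i, weylVector m i = 0 := by
  have gauss : (∑ i : Fin (m + 1), ((i : ℕ) : ℝ)) * 2 = (m + 1) * m := by
    rw [Fin.sum_univ_eq_sum_range (fun i => (i : ℝ)), ← Nat.cast_sum]
    exact_mod_cast sum_range_id_mul_two (m + 1)
  simp only [weylVector, sum_sub_distrib, sum_const, card_univ, Fintype.card_fin, nsmul_eq_mul]
  push_cast
  linarith

lemma weylVector_sub_weylVector_add_one (m : ℕ) (i : Fin (m + 1)) :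
    weylVector m i - weylVector m (i + 1) = 1 - if i + 1 = 0 then (m + 1 : ℝ) else 0 := by
  simp only [weylVector, Fin.val_add_one]
  by_cases hi : i = Fin.last m
  · simp [hi, Fin.last_add_one]
  · have : i + 1 ≠ 0 := fun h => hi (add_right_cancel (h.trans (Fin.last_add_one m).symm))
    simp [hi, this]

section CyclicDifferences

variable {m : ℕ}

lemma sum_sub_apply_add_one (v : Fin (m + 1) → ℝ) : ∑ i, (v i - v (i + 1)) = 0 := by
  rw [sum_sub_distrib, sub_eq_zero]
  exact (Equiv.sum_comp (Equiv.addRight 1) v).symm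

lemma eq_of_sum_eq_of_sub_apply_add_one_eq {u v : Fin (m + 1) → ℝ}
    (hsum : ∑ i, u i = ∑ i, v i) (hdiff : ∀ i, u i - u (i + 1) = v i - v (i + 1)) : u = v := by
  have hconst : ∀ i, u i - v i = u 0 - v 0 := by
    refine Fin.induction rfl fun i hi => ?_
    rw [← Fin.coeSucc_eq_succ, ← hi]
    linarith [hdiff i.castSucc]
  have hzero : (m + 1 : ℝ) * (u 0 - v 0) = 0 :=
    calc (m + 1 : ℝ) * (u 0 - v 0) = ∑ i, (u i - v i) := by simp [hconst, mul_sub]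
      _ = 0 := by rw [sum_sub_distrib, hsum, sub_self]
  funext i
  rw [← sub_eq_zero, hconst i]
  exact (mul_eq_zero.mp hzero).resolve_left (Nat.cast_add_one_ne_zero m)

noncomputable def gapWeight (v : Fin (m + 1) → ℝ) (s : Fin (m + 1)) : ℝ :=
  (1 - (v s - v (s + 1))) / (m + 1)

lemma sum_gapWeight (v : Fin (m + 1) → ℝ) : ∑ s, gapWeight v s = 1 := by
  unfold gapWeight
  rw [← sum_div, sum_sub_distrib, sum_sub_apply_add_one]
  simp [Nat.cast_add_one_ne_zero]

lemma gapWeight_nonneg {v : Fin (m + 1) → ℝ} {s : Fin (m + 1)} (h : v s - v (s + 1) ≤ 1) :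
    0 ≤ gapWeight v s :=
  div_nonneg (by linarith) (by positivity)

theorem sum_gapWeight_smul_weylVector_rotate (v : Fin (m + 1) → ℝ) (hsum : ∑ i, v i = 0) :
    ∑ s, gapWeight v s • (fun i => weylVector m (i - (s + 1))) = v := by
  refine eq_of_sum_eq_of_sub_apply_add_one_eq ?_ fun i => ?_
  · have hrotate (s : Fin (m + 1)) : ∑ i, weylVector m (i - (s + 1)) = 0 :=
      (Equiv.sum_comp (Equiv.subRight (s + 1)) _).trans (sum_weylVector m)
    simp only [Finset.sum_apply, Pi.smul_apply, smul_eq_mul, hsum]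
    rw [sum_comm]
    simp [← mul_sum, hrotate]
  · have hjump (s : Fin (m + 1)) : weylVector m (i - (s + 1)) - weylVector m (i + 1 - (s + 1))
        = 1 - if s = i then (m + 1 : ℝ) else 0 := by
      rw [add_sub_right_comm, weylVector_sub_weylVector_add_one,
        show i - (s + 1) + 1 = i - s by abel]
      simp only [sub_eq_zero, eq_comm]
    simp only [Finset.sum_apply, Pi.smul_apply, smul_eq_mul, ← sum_sub_distrib, ← mul_sub, hjump]
    simp only [mul_sub, mul_one, sum_sub_distrib, sum_gapWeight, mul_ite, mul_zero, sum_ite_eq',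
      mem_univ, if_true]
    unfold gapWeight
    field_simp
    ring

theorem mem_convexHull_weylVector_rotations {v : Fin (m + 1) → ℝ} (hsum : ∑ i, v i = 0)
    (hgap : ∀ i, v i - v (i + 1) ≤ 1) :
    v ∈ convexHull ℝ (Set.range fun s i => weylVector m (i - (s + 1))) := by
  rw [← sum_gapWeight_smul_weylVector_rotate v hsum]
  exact (convex_convexHull ℝ _).sum_mem (fun s _ => gapWeight_nonneg (hgap s))
    (sum_gapWeight v) fun s _ => subset_convexHull ℝ _ ⟨s, rfl⟩

end CyclicDifferences

theorem mem_convexHull_weylOrbit_of_gaps_le_one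
    (n : ℕ) (hn : 1 ≤ n) (v : Fin n → ℝ)
    (hdec : ∀ i j : Fin n, i ≤ j → v j ≤ v i)
    (hsum : ∑ i, v i = 0)
    (hgap : ∀ i j : Fin n, (i : ℕ) + 1 = (j : ℕ) → v i - v j ≤ 1) :
    v ∈ convexHull ℝ
      {w : Fin n → ℝ | ∃ σ : Equiv.Perm (Fin n),
        w = fun i => ((n : ℝ) + 1 - 2 * ((σ i : ℕ) + 1)) / 2} := by
  obtain ⟨m, rfl⟩ : ∃ m, n = m + 1 := ⟨n - 1, by omega⟩
  have hcyclic : ∀ i : Fin (m + 1), v i - v (i + 1) ≤ 1 := by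
    intro i
    by_cases hi : i = Fin.last m
    · rw [hi, Fin.last_add_one]
      linarith [hdec 0 (Fin.last m) (Fin.zero_le _)]
    · exact hgap _ _ (by rw [Fin.val_add_one, if_neg hi])
  refine convexHull_mono ?_ (mem_convexHull_weylVector_rotations hsum hcyclic)
  rintro _ ⟨s, rfl⟩
  refine ⟨Equiv.subRight (s + 1), funext fun i => ?_⟩
  simp only [weylVector, Equiv.subRight_apply]
  push_cast
  ring
end
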